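/- For n > k ≥ 0, the number b(n,k) of boolean intervals of rank k in the middle order P_n satisfies b(n,k) = Σ_{i=0}^{n} C(i,k)·c(n, n−i), where c(n,j) is the signless Stirling number of the first kind (the number of permutations of size n with j cycles). -/

import Mathlib

/-- The inversion sequence of a permutation `w` of `Fin n` (0-indexed values):
`invSeq w i` counts the values `j < i` appearing after `i` in one-line notation. -/
def invSeq {n : ℕ} (w : Equiv.Perm (Fin n)) (i : Fin n) : ℕ :=
  (Finset.univ.filter (fun j : Fin n => j < i ∧ w.symm i < w.symm j)).card

/-- The middle order on permutations: coordinate-wise comparison of inversion sequences. -/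
def midLe {n : ℕ} (v w : Equiv.Perm (Fin n)) : Prop :=
  ∀ i, invSeq v i ≤ invSeq w i

/-- `b n k`: number of boolean intervals of rank `k` in the middle order `P_n`. -/
noncomputable def b (n k : ℕ) : ℕ :=
  Nat.card {p : Equiv.Perm (Fin n) × Equiv.Perm (Fin n) //
    midLe p.1 p.2 ∧ (∀ i, invSeq p.2 i ≤ invSeq p.1 i + 1) ∧
    (Finset.univ.filter (fun i : Fin n => invSeq p.2 i = invSeq p.1 i + 1)).card = k}

/-- `c n j`: the signless Stirling number of the first kind, i.e. the number of
permutations of size `n` with `j` cycles (counting fixed points as cycles). -/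
noncomputable def c (n j : ℕ) : ℕ :=
  Nat.card {w : Equiv.Perm (Fin n) //
    Multiset.card w.cycleType + (n - w.support.card) = j}

open Equiv Equiv.Perm Finset

-- count helper
lemma card_filter_lt {m : ℕ} (q : Fin m) :
    #(univ.filter (fun x : Fin m => q < x)) = m - 1 - q.val := by
  have h1 : (univ.filter (fun x : Fin m => q < x)) = Finset.Ioi q := by
    ext x; simp
  rw [h1, Fin.card_Ioi]

def posFun {n : ℕ} (p : Fin (n+1)) (e : Equiv.Perm (Fin n)) : Fin (n+1) → Fin (n+1) :=
  fun i => Fin.lastCases p (fun j => p.succAbove (e.symm j)) i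

lemma posFun_last {n : ℕ} (p : Fin (n+1)) (e : Equiv.Perm (Fin n)) : posFun p e (Fin.last n) = p :=
  Fin.lastCases_last

lemma posFun_castSucc {n : ℕ} (p : Fin (n+1)) (e : Equiv.Perm (Fin n)) (j : Fin n) :
    posFun p e (Fin.castSucc j) = p.succAbove (e.symm j) :=
  Fin.lastCases_castSucc ..

lemma posFun_injective {n : ℕ} (p : Fin (n+1)) (e : Equiv.Perm (Fin n)) :
    Function.Injective (posFun p e) := by
  intro i j hij
  induction i using Fin.lastCases with
  | last =>
    induction j using Fin.lastCases with
    | last => rfl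
    | cast j =>
      rw [posFun_last, posFun_castSucc] at hij
      exact absurd hij.symm (Fin.succAbove_ne p _)
  | cast i =>
    induction j using Fin.lastCases with
    | last =>
      rw [posFun_last, posFun_castSucc] at hij
      exact absurd hij (Fin.succAbove_ne p _)
    | cast j =>
      rw [posFun_castSucc, posFun_castSucc] at hij
      have := e.symm.injective (Fin.succAbove_right_injective hij)
      exact congrArg Fin.castSucc this

noncomputable def posMap {n : ℕ} (p : Fin (n+1)) (e : Equiv.Perm (Fin n)) : Equiv.Perm (Fin (n+1)) :=
  Equiv.ofBijective (posFun p e) ((Fintype.bijective_iff_injective_and_card _).2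
    ⟨posFun_injective p e, rfl⟩)

noncomputable def ins {n : ℕ} (pe : Fin (n+1) × Equiv.Perm (Fin n)) : Equiv.Perm (Fin (n+1)) :=
  (posMap pe.1 pe.2).symm

lemma ins_symm {n : ℕ} (p : Fin (n+1)) (e : Equiv.Perm (Fin n)) :
    (ins (p, e)).symm = posMap p e := Equiv.symm_symm _

lemma invSeq_ins_last {n : ℕ} (p : Fin (n+1)) (e : Equiv.Perm (Fin n)) :
    invSeq (ins (p, e)) (Fin.last n) = n - p.val := by
  rw [invSeq, Finset.card_filter]
  rw [Fin.sum_univ_castSucc]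
  rw [if_neg (fun h => lt_irrefl _ h.1 : ¬(Fin.last n < Fin.last n ∧ (Equiv.symm (ins (p, e))) (Fin.last n) < (Equiv.symm (ins (p, e))) (Fin.last n)))]
  have : ∀ x : Fin n, ((Fin.castSucc x < Fin.last n ∧
      (ins (p,e)).symm (Fin.last n) < (ins (p,e)).symm (Fin.castSucc x)) ↔
      (p < p.succAbove (e.symm x))) := by
    intro x
    rw [ins_symm]
    show (_ ∧ posMap p e _ < posMap p e _) ↔ _
    rw [show posMap p e (Fin.last n) = p from posFun_last p e,
       show posMap p e (Fin.castSucc x) = p.succAbove (e.symm x) from posFun_castSucc p e x]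
    simp [Fin.castSucc_lt_last]
  rw [Finset.sum_congr rfl (fun x _ => by rw [if_congr (this x) rfl rfl]), add_zero]
  rw [Equiv.sum_comp e.symm (fun y => if p < p.succAbove y then (1:ℕ) else 0)]
  have h2 : ∑ y : Fin n, (if p < p.succAbove y then 1 else 0) =
      ∑ x : Fin (n+1), (if p < x then 1 else 0) := by
    rw [Fin.sum_univ_succAbove (fun x : Fin (n+1) => if p < x then 1 else 0) p]
    simp
  rw [h2, ← Finset.card_filter, card_filter_lt]
  simp

lemma invSeq_ins_castSucc {n : ℕ} (p : Fin (n+1)) (e : Equiv.Perm (Fin n)) (i : Fin n) :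
    invSeq (ins (p, e)) (Fin.castSucc i) = invSeq e i := by
  rw [invSeq, invSeq, Finset.card_filter, Finset.card_filter, Fin.sum_univ_castSucc]
  rw [if_neg (fun h => absurd h.1 (by simp [Fin.lt_iff_val_lt_val]) :
    ¬(Fin.last n < Fin.castSucc i ∧ (Equiv.symm (ins (p, e))) (Fin.castSucc i) <
      (Equiv.symm (ins (p, e))) (Fin.last n))), add_zero]
  refine Finset.sum_congr rfl (fun x _ => ?_)
  refine if_congr ?_ rfl rfl
  rw [ins_symm]
  show (_ ∧ posMap p e _ < posMap p e _) ↔ _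
  rw [show posMap p e (Fin.castSucc i) = p.succAbove (e.symm i) from posFun_castSucc p e i,
     show posMap p e (Fin.castSucc x) = p.succAbove (e.symm x) from posFun_castSucc p e x]
  rw [Fin.castSucc_lt_castSucc_iff, Fin.succAbove_lt_succAbove_iff]

lemma invSeq_le {n : ℕ} (w : Equiv.Perm (Fin n)) (i : Fin n) : invSeq w i ≤ i.val := by
  calc invSeq w i ≤ #(univ.filter (fun j : Fin n => j < i)) :=
        Finset.card_le_card (by intro j hj; simp only [Finset.mem_filter] at *; exact ⟨hj.1, hj.2.1⟩)
    _ = i.val := by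
        have : (univ.filter (fun j : Fin n => j < i)) = Finset.Iio i := by ext x; simp
        rw [this, Fin.card_Iio]

lemma ins_bijective {n : ℕ} : Function.Bijective (ins (n := n)) := by
  refine (Fintype.bijective_iff_injective_and_card _).2 ⟨?_, by
    simp [Fintype.card_perm, Nat.factorial_succ]⟩
  rintro ⟨p1, e1⟩ ⟨p2, e2⟩ h
  have h' : posMap p1 e1 = posMap p2 e2 := by
    rw [← ins_symm p1 e1, ← ins_symm p2 e2, h]
  have hfun : ∀ x, posFun p1 e1 x = posFun p2 e2 x := fun x => congrFun (congrArg (fun (q : Equiv.Perm (Fin (n+1))) => (q : Fin (n+1) → Fin (n+1))) h') x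
  have hp : p1 = p2 := by
    have := hfun (Fin.last n); rwa [posFun_last, posFun_last] at this
  subst hp
  have he : e1 = e2 := by
    have : e1.symm = e2.symm := by
      apply Equiv.ext; intro j
      have := hfun (Fin.castSucc j)
      rw [posFun_castSucc, posFun_castSucc] at this
      exact Fin.succAbove_right_injective this
    rw [← Equiv.symm_symm e1, this, Equiv.symm_symm]
  rw [he]

lemma invSeq_injective {n : ℕ} : ∀ v w : Equiv.Perm (Fin n), invSeq v = invSeq w → v = w := by
  induction n with
  | zero => intro v w _; exact Subsingleton.elim v w
  | succ n ih =>
    intro v w hvw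
    obtain ⟨⟨pv, ev⟩, rfl⟩ := ins_bijective.2 v
    obtain ⟨⟨pw, ew⟩, rfl⟩ := ins_bijective.2 w
    have hp : pv = pw := by
      have h1 := congrFun hvw (Fin.last n)
      rw [invSeq_ins_last, invSeq_ins_last] at h1
      have := pv.isLt; have := pw.isLt
      exact Fin.ext (by omega)
    have he : ev = ew := by
      apply ih
      funext i
      have := congrFun hvw (Fin.castSucc i)
      rwa [invSeq_ins_castSucc, invSeq_ins_castSucc] at this
    rw [hp, he]

lemma invSeq_surjective {n : ℕ} : ∀ f : Fin n → ℕ, (∀ i, f i ≤ i.val) →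
    ∃ w : Equiv.Perm (Fin n), ∀ i, invSeq w i = f i := by
  induction n with
  | zero => intro f _; exact ⟨1, fun i => i.elim0⟩
  | succ n ih =>
    intro f hf
    obtain ⟨e, he⟩ := ih (fun i => f (Fin.castSucc i)) (fun i => hf (Fin.castSucc i))
    have hfl : f (Fin.last n) ≤ n := hf (Fin.last n)
    refine ⟨ins (⟨n - f (Fin.last n), by omega⟩, e), fun i => ?_⟩
    induction i using Fin.lastCases with
    | last => rw [invSeq_ins_last]; simp; omega
    | cast i => rw [invSeq_ins_castSucc, he]


-- generic fiber counting
lemma fiber_count {α β γ : Type*} [Fintype α] [Fintype β] [Fintype γ] [DecidableEq α]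
    [DecidableEq β] [DecidableEq γ]
    (E : γ × β → α) (hE : Function.Bijective E) (t : α → ℕ) (s : β → ℕ) (p0 : γ)
    (h : ∀ p e, t (E (p, e)) = s e + if p = p0 then 1 else 0) (j : ℕ) :
    #(univ.filter fun a => t a = j) =
      (if j = 0 then 0 else #(univ.filter fun e => s e = j - 1)) +
        (Fintype.card γ - 1) * #(univ.filter fun e => s e = j) := by
  have key : #(univ.filter fun a => t a = j) = ∑ p : γ, #(univ.filter fun e : β => t (E (p, e)) = j) := by
    rw [Finset.card_filter]
    rw [← Equiv.sum_comp (Equiv.ofBijective E hE) (fun a => if t a = j then 1 else 0)]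
    rw [Fintype.sum_prod_type]
    exact Finset.sum_congr rfl (fun p _ => (Finset.card_filter _ _).symm)
  rw [key]
  have hsplit : ∀ p : γ, #(univ.filter fun e : β => t (E (p, e)) = j) =
      if p = p0 then (if j = 0 then 0 else #(univ.filter fun e => s e = j - 1))
      else #(univ.filter fun e => s e = j) := by
    intro p
    by_cases hp : p = p0
    · rw [if_pos hp]
      by_cases hj : j = 0
      · rw [if_pos hj]
        rw [Finset.card_eq_zero, Finset.filter_eq_empty_iff]
        intro e _
        rw [h p e, if_pos hp, hj]
        omega
      · rw [if_neg hj]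
        congr 1
        ext e
        simp only [Finset.mem_filter, h p e, if_pos hp]
        constructor
        · rintro ⟨he, h2⟩; exact ⟨he, by omega⟩
        · rintro ⟨he, h2⟩; exact ⟨he, by omega⟩
    · rw [if_neg hp]
      congr 1
      ext e
      simp [h p e, if_neg hp]
  rw [Finset.sum_congr rfl (fun p _ => hsplit p)]
  rw [← Finset.add_sum_erase univ _ (Finset.mem_univ p0), if_pos rfl]
  congr 1
  rw [Finset.sum_congr rfl (fun p hp => if_neg (Finset.ne_of_mem_erase hp)),
    Finset.sum_const, Finset.card_erase_of_mem (Finset.mem_univ _), Finset.card_univ, smul_eq_mul]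

-- zeros statistic
def zstat {n : ℕ} (w : Equiv.Perm (Fin n)) : ℕ :=
  #(univ.filter fun i : Fin n => invSeq w i = 0)

lemma zstat_ins {n : ℕ} (p : Fin (n+1)) (e : Equiv.Perm (Fin n)) :
    zstat (ins (p, e)) = zstat e + if p = Fin.last n then 1 else 0 := by
  rw [zstat, zstat, Finset.card_filter, Finset.card_filter, Fin.sum_univ_castSucc]
  congr 1
  · exact Finset.sum_congr rfl (fun i _ => by rw [invSeq_ins_castSucc])
  · rw [invSeq_ins_last]
    have := p.isLt
    by_cases hp : p = Fin.last n
    · rw [if_pos hp, if_pos (by simp [hp])]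
    · rw [if_neg hp, if_neg ?_]
      have : p.val ≠ n := fun hv => hp (Fin.ext hv)
      omega


variable {α : Type*} [Fintype α] [DecidableEq α]

/-- total number of cycles, counting fixed points -/
def tcA (w : Equiv.Perm α) : ℕ :=
  Multiset.card w.cycleType + (Fintype.card α - w.support.card)

lemma disjoint_factor (σ f : Equiv.Perm α) (h : f ∈ σ.cycleFactorsFinset) :
    Equiv.Perm.Disjoint f (σ * f⁻¹) := by
  obtain ⟨hc, hf⟩ := (mem_cycleFactorsFinset_iff).1 h
  intro x
  by_cases hx : f x = x
  · exact Or.inl hx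
  · right
    have hx1 : x ∈ f.support := mem_support.2 hx
    have hx2 : f⁻¹ x ∈ f.support := by
      rw [← support_inv]
      exact apply_mem_support.2 (by rwa [support_inv])
    show σ (f⁻¹ x) = x
    rw [← hf _ hx2, Perm.inv_def, Equiv.apply_symm_apply]

/-- removing `a` from its cycle increases total cycle count by 1 -/
lemma tcA_swap_mul (σ : Equiv.Perm α) (a : α) (h : σ a ≠ a) :
    tcA (Equiv.swap a (σ a) * σ) = tcA σ + 1 := by
  classical
  set C := σ.cycleOf a with hCdef
  have hmem : C ∈ σ.cycleFactorsFinset :=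
    cycleOf_mem_cycleFactorsFinset_iff.mpr (mem_support.2 h)
  obtain ⟨hCcyc, hCf⟩ := (mem_cycleFactorsFinset_iff).1 hmem
  set τ := σ * C⁻¹ with hτdef
  have hdisj : Equiv.Perm.Disjoint C τ := disjoint_factor σ C hmem
  have hστ : τ * C = σ := by rw [hτdef]; group
  have hσ : C * τ = σ := by rw [hdisj.commute.eq]; exact hστ
  have hCa : C a = σ a := cycleOf_apply_self σ a
  have h2 : C a ≠ a := by rw [hCa]; exact h
  have haC : a ∈ C.support := mem_support.2 h2
  have hX : Equiv.swap a (σ a) * σ = (Equiv.swap a (C a) * C) * τ := by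
    rw [← hCa, mul_assoc, hσ]
  have hsuppσ : σ.support.card = C.support.card + τ.support.card := by
    rw [← hσ]; exact hdisj.card_support_mul
  have hcTσ : Multiset.card σ.cycleType =
      Multiset.card C.cycleType + Multiset.card τ.cycleType := by
    rw [← hσ, hdisj.cycleType_mul, Multiset.card_add]
  have hcTC : Multiset.card C.cycleType = 1 := by
    rw [hCcyc.cycleType]; rfl
  have hsle : σ.support.card ≤ Fintype.card α := Finset.card_le_univ _
  by_cases hcase : C (C a) = a
  · -- C is the transposition (a, σ a)
    have hCswap : C = Equiv.swap a (C a) := by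
      ext b
      by_cases hb : b ∈ C.support
      · have hsc : C.SameCycle a b :=
          hCcyc.sameCycle h2 (mem_support.1 hb)
        obtain ⟨i, hi⟩ := hsc
        rcases zpow_apply_eq_of_apply_apply_eq_self hcase i with hcab | hcab
        · rw [hi] at hcab; subst hcab
          rw [Equiv.swap_apply_left]
        · rw [hi] at hcab; subst hcab
          rw [hcase, Equiv.swap_apply_right]
      · rw [notMem_support.1 hb]
        rw [Equiv.swap_apply_of_ne_of_ne]
        · intro hba; rw [hba] at hb; exact hb haC
        · intro hbCa; rw [hbCa] at hb; exact hb (apply_mem_support.2 haC)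
    have hCC : Equiv.swap a (C a) * C = 1 := by
      nth_rewrite 2 [hCswap]; exact Equiv.swap_mul_self _ _
    have hX1 : Equiv.swap a (σ a) * σ = τ := by rw [hX, hCC, one_mul]
    have hsC : C.support.card = 2 := by
      rw [hCswap]; exact card_support_swap (Ne.symm h2)
    rw [hX1, tcA, tcA]
    omega
  · have hC' : Equiv.Perm.IsCycle (Equiv.swap a (C a) * C) := hCcyc.swap_mul h2 hcase
    have hsupp' : (Equiv.swap a (C a) * C).support = C.support \ {a} :=
      support_swap_mul_eq C a hcase
    have hdisj' : Equiv.Perm.Disjoint (Equiv.swap a (C a) * C) τ := by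
      rw [disjoint_iff_disjoint_support] at hdisj ⊢
      rw [hsupp']
      exact Finset.disjoint_of_subset_left (Finset.sdiff_subset) hdisj
    have hsC' : (Equiv.swap a (C a) * C).support.card = C.support.card - 1 := by
      rw [hsupp', Finset.card_sdiff_of_subset (by simpa using haC)]
      rfl
    have hcT' : Multiset.card (Equiv.swap a (C a) * C).cycleType = 1 := by
      rw [hC'.cycleType]; rfl
    have hsCpos : 1 ≤ C.support.card := Finset.card_pos.2 ⟨a, haC⟩
    rw [hX, tcA, tcA]
    rw [hdisj'.cycleType_mul, Multiset.card_add, hdisj'.card_support_mul]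
    omega

def finSuccNeZeroEquiv (n : ℕ) : Fin n ≃ {i : Fin (n+1) // i ≠ 0} where
  toFun x := ⟨x.succ, Fin.succ_ne_zero x⟩
  invFun i := i.1.pred i.2
  left_inv x := by simp
  right_inv i := by simp

lemma decomposeFin_zero_eq {n : ℕ} (e : Equiv.Perm (Fin n)) :
    Equiv.Perm.decomposeFin.symm (0, e) = e.extendDomain (finSuccNeZeroEquiv n) := by
  ext i
  induction i using Fin.cases with
  | zero =>
    rw [Equiv.Perm.decomposeFin_symm_apply_zero]
    rw [Equiv.Perm.extendDomain_apply_not_subtype]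
    simp
  | succ x =>
    rw [Equiv.Perm.decomposeFin_symm_apply_succ]
    have : (x.succ : Fin (n+1)) = ((finSuccNeZeroEquiv n) x : Fin (n+1)) := rfl
    rw [this, Equiv.Perm.extendDomain_apply_image]
    simp [finSuccNeZeroEquiv]

lemma tcA_decomposeFin_zero {n : ℕ} (e : Equiv.Perm (Fin n)) :
    tcA (Equiv.Perm.decomposeFin.symm (0, e)) = tcA e + 1 := by
  rw [decomposeFin_zero_eq, tcA, tcA]
  rw [Equiv.Perm.cycleType_extendDomain, Equiv.Perm.card_support_extend_domain]
  have := Finset.card_le_univ e.support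
  simp only [Finset.card_univ, Fintype.card_fin] at this ⊢
  omega

lemma decomposeFin_swap_eq {n : ℕ} (p : Fin (n+1)) (e : Equiv.Perm (Fin n)) :
    Equiv.Perm.decomposeFin.symm (p, e) =
      Equiv.swap 0 p * Equiv.Perm.decomposeFin.symm (0, e) := by
  ext i
  induction i using Fin.cases with
  | zero => simp
  | succ x => simp

lemma tcA_decomposeFin {n : ℕ} (p : Fin (n+1)) (e : Equiv.Perm (Fin n)) :
    tcA (Equiv.Perm.decomposeFin.symm (p, e)) = tcA e + if p = 0 then 1 else 0 := by
  by_cases hp : p = 0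
  · rw [hp, if_pos rfl, tcA_decomposeFin_zero]
  · rw [if_neg hp, add_zero]
    set g := Equiv.Perm.decomposeFin.symm (0, e) with hg
    set σ' := Equiv.Perm.decomposeFin.symm (p, e) with hσ'
    have hσg : σ' = Equiv.swap 0 p * g := decomposeFin_swap_eq p e
    have hσ'0 : σ' 0 = p := Equiv.Perm.decomposeFin_symm_apply_zero p e
    have hne : σ' 0 ≠ 0 := by rw [hσ'0]; exact hp
    have key := tcA_swap_mul σ' 0 hne
    rw [hσ'0] at key
    have hgg : Equiv.swap 0 p * σ' = g := by
      rw [hσg, ← mul_assoc, Equiv.swap_mul_self, one_mul]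
    rw [hgg] at key
    have := tcA_decomposeFin_zero e
    rw [← hg] at this
    omega

instance midLe.decidable {n : ℕ} (v w : Equiv.Perm (Fin n)) : Decidable (midLe v w) :=
  decidable_of_iff (∀ i, invSeq v i ≤ invSeq w i) Iff.rfl

noncomputable def zc (n j : ℕ) : ℕ :=
  #(Finset.univ.filter fun w : Equiv.Perm (Fin n) => zstat w = j)

noncomputable def cc (n j : ℕ) : ℕ :=
  #(Finset.univ.filter fun w : Equiv.Perm (Fin n) => tcA w = j)

lemma zc_eq_cc : ∀ n j, zc n j = cc n j := by
  intro n
  induction n with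
  | zero =>
    intro j
    have h1 : ∀ w : Equiv.Perm (Fin 0), zstat w = 0 := by
      intro w; rw [zstat]; simp
    have h2 : ∀ w : Equiv.Perm (Fin 0), tcA w = 0 := by
      intro w
      have : w = 1 := Subsingleton.elim w 1
      subst this
      rw [tcA, Equiv.Perm.cycleType_one]
      simp
    rw [zc, cc]
    refine congrArg Finset.card (Finset.filter_congr ?_)
    intro w _
    simp [h1 w, h2 w]
  | succ n ih =>
    intro j
    have hz := fiber_count ins ins_bijective zstat zstat (Fin.last n) zstat_ins j
    have hc := fiber_count (fun pe : Fin (n+1) × Equiv.Perm (Fin n) =>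
        Equiv.Perm.decomposeFin.symm pe) (Equiv.bijective _) tcA tcA 0
        (fun p e => tcA_decomposeFin p e) j
    rw [zc, cc, hz, hc]
    simp only [Fintype.card_fin]
    rw [show #(Finset.univ.filter fun e : Equiv.Perm (Fin n) => zstat e = j - 1) = zc n (j-1) from rfl]
    rw [show #(Finset.univ.filter fun e : Equiv.Perm (Fin n) => zstat e = j) = zc n j from rfl]
    rw [ih (j-1), ih j]
    rfl

lemma c_eq_cc (n j : ℕ) : c n j = cc n j := by
  rw [c, Nat.card_eq_fintype_card, Fintype.card_subtype, cc]
  congr 1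
  apply Finset.filter_congr
  intro w _
  rw [tcA, Fintype.card_fin]

lemma zstat_le (n : ℕ) (w : Equiv.Perm (Fin n)) : zstat w ≤ n := by
  rw [zstat]
  calc #(Finset.univ.filter fun i : Fin n => invSeq w i = 0) ≤ #(Finset.univ : Finset (Fin n)) :=
        Finset.card_le_card (Finset.filter_subset _ _)
    _ = n := by simp

lemma count_lower {n : ℕ} (k : ℕ) (w : Equiv.Perm (Fin n)) :
    #(Finset.univ.filter fun v : Equiv.Perm (Fin n) => midLe v w ∧
      (∀ i, invSeq w i ≤ invSeq v i + 1) ∧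
      #(Finset.univ.filter (fun i : Fin n => invSeq w i = invSeq v i + 1)) = k) =
    (n - zstat w).choose k := by
  classical
  set NZ := Finset.univ.filter (fun i : Fin n => invSeq w i ≠ 0) with hNZ
  have hNZcard : NZ.card = n - zstat w := by
    have hsplit := Finset.card_filter_add_card_filter_not
      (s := (Finset.univ : Finset (Fin n))) (p := fun i => invSeq w i ≠ 0)
    simp only [not_not, Finset.card_univ, Fintype.card_fin] at hsplit
    rw [hNZ, zstat]
    omega
  rw [← hNZcard, ← Finset.card_powersetCard]
  apply Finset.card_bij (fun v _ => Finset.univ.filter (fun i : Fin n => invSeq w i = invSeq v i + 1))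
  · -- maps to powersetCard
    rintro v hv
    simp only [Finset.mem_filter, Finset.mem_univ, true_and] at hv
    rw [Finset.mem_powersetCard]
    refine ⟨?_, hv.2.2⟩
    intro i hi
    simp only [Finset.mem_filter, Finset.mem_univ, true_and] at hi ⊢
    rw [hNZ]
    simp only [Finset.mem_filter, Finset.mem_univ, true_and]
    omega
  · -- injective
    intro v1 hv1 v2 hv2 heq
    simp only [Finset.mem_filter, Finset.mem_univ, true_and] at hv1 hv2
    apply invSeq_injective
    funext i
    have e1 := hv1.1 i; have e2 := hv1.2.1 i
    have e3 := hv2.1 i; have e4 := hv2.2.1 i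
    by_cases hi : invSeq w i = invSeq v1 i + 1
    · have hi2 : i ∈ Finset.univ.filter (fun i : Fin n => invSeq w i = invSeq v2 i + 1) := by
        rw [← heq]; simp [hi]
      simp only [Finset.mem_filter, Finset.mem_univ, true_and] at hi2
      omega
    · have hi2 : i ∉ Finset.univ.filter (fun i : Fin n => invSeq w i = invSeq v2 i + 1) := by
        rw [← heq]; simp [hi]
      simp only [Finset.mem_filter, Finset.mem_univ, true_and] at hi2
      omega
  · -- surjective
    intro S hS
    rw [Finset.mem_powersetCard] at hS
    obtain ⟨hSsub, hScard⟩ := hS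
    have hf : ∀ i : Fin n, (invSeq w i - (if i ∈ S then 1 else 0)) ≤ i.val := by
      intro i
      have := invSeq_le w i
      omega
    obtain ⟨v, hv⟩ := invSeq_surjective (fun i => invSeq w i - (if i ∈ S then 1 else 0)) hf
    have hSnz : ∀ i ∈ S, invSeq w i ≠ 0 := by
      intro i hi
      have := hSsub hi
      rw [hNZ] at this
      simp only [Finset.mem_filter, Finset.mem_univ, true_and] at this
      exact this
    have hiff : ∀ i : Fin n, invSeq w i = invSeq v i + 1 ↔ i ∈ S := by
      intro i
      rw [hv i]
      by_cases hi : i ∈ S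
      · have := hSnz i hi
        rw [if_pos hi]
        constructor
        · intro _; exact hi
        · intro _; omega
      · rw [if_neg hi]
        constructor
        · intro hcon; exfalso; omega
        · intro hcon; exact absurd hcon hi
    have hveq : Finset.univ.filter (fun i : Fin n => invSeq w i = invSeq v i + 1) = S := by
      ext i
      simp only [Finset.mem_filter, Finset.mem_univ, true_and]
      exact hiff i
    refine ⟨v, ?_, hveq⟩
    simp only [Finset.mem_filter, Finset.mem_univ, true_and]
    refine ⟨?_, ?_, by rw [hveq]; exact hScard⟩
    · intro i
      rw [hv i]
      omega
    · intro i
      rw [hv i]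
      have := hSnz i
      by_cases hi : i ∈ S
      · have := hSnz i hi
        rw [if_pos hi]
        omega
      · rw [if_neg hi]
        omega

lemma b_eq_sum (n k : ℕ) :
    b n k = ∑ w : Equiv.Perm (Fin n), (n - zstat w).choose k := by
  rw [b, Nat.card_eq_fintype_card, Fintype.card_subtype]
  rw [Finset.card_filter]
  rw [Fintype.sum_prod_type_right]
  refine Finset.sum_congr rfl (fun w _ => ?_)
  rw [← count_lower k w, Finset.card_filter]

/-- Formula for the number of rank-`k` boolean intervals in the middle order. -/
theorem boolean_intervals_by_rank_formula (n k : ℕ) (h : k < n) :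
    b n k = ∑ i ∈ Finset.range (n + 1), i.choose k * c n (n - i) := by
  rw [b_eq_sum]
  have step1 : ∑ w : Equiv.Perm (Fin n), (n - zstat w).choose k =
      ∑ m ∈ Finset.range (n+1), ∑ w ∈ Finset.univ.filter
        (fun w : Equiv.Perm (Fin n) => zstat w = m), (n - zstat w).choose k := by
    rw [Finset.sum_fiberwise_of_maps_to]
    intro w _
    rw [Finset.mem_range]
    exact Nat.lt_succ_of_le (zstat_le n w)
  rw [step1]
  have step2 : ∀ m ∈ Finset.range (n+1),
      (∑ w ∈ Finset.univ.filter (fun w : Equiv.Perm (Fin n) => zstat w = m),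
        (n - zstat w).choose k) = (n - m).choose k * c n m := by
    intro m _
    rw [c_eq_cc, ← zc_eq_cc, zc]
    have hcong : ∀ w ∈ Finset.univ.filter (fun w : Equiv.Perm (Fin n) => zstat w = m),
        (n - zstat w).choose k = (n - m).choose k := by
      intro w hw; rw [(Finset.mem_filter.1 hw).2]
    rw [Finset.sum_congr rfl hcong, Finset.sum_const, smul_eq_mul, mul_comm]
  rw [Finset.sum_congr rfl step2]
  rw [← Finset.sum_range_reflect (fun i => i.choose k * c n (n - i)) (n+1)]
  refine Finset.sum_congr rfl (fun m hm => ?_)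
  rw [Finset.mem_range] at hm
  have e1 : n + 1 - 1 - m = n - m := by omega
  rw [e1]
  have e2 : n - (n - m) = m := by omega
  rw [e2]
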